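/- Let T₁ and T₂ be reduction operators relative to a general (not necessarily totally) ordered set (G,<). If ker(T₁) ⊆ ker(T₂), then every T₂-reduced generator is T₁-reduced; consequently, two generalized reduction operators with the same kernel are equal, and the relation ker-reverse-inclusion is a partial order on the set of generalized reduction operators. -/

import Mathlib

/-!
A reduction operator never moves a generator upwards, so it maps a vector supported
below `g` to a vector supported below `g`. If `ker T₁ ⊆ ker T₂`, then `T₂ ∘ T₁ = T₂` by
idempotency of `T₁`; for a `T₂`-reduced generator `g` that is not `T₁`-reduced, this
gives `T₂ (T₁ g) = g` although `T₁ g` is supported strictly below `g`.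

The image of a reduction operator is spanned by its reduced generators: at a maximal
non-reduced generator in the support of a fixed vector, no generator of the support
can contribute. Hence operators with the same kernel have the same reduced generators,
the same image, and, being idempotent, coincide.
-/

def IsGenRedOp {K G : Type*} [Field K] [PartialOrder G]
    (T : Module.End K (G →₀ K)) : Prop :=
  T ∘ₗ T = T ∧ ∀ g : G, T (Finsupp.single g 1) = Finsupp.single g 1 ∨
    ∀ g' ∈ (T (Finsupp.single g 1)).support, g' < g

open Finsupp

lemma LinearMap.exists_mem_support_single_of_mem_support {R α β : Type*} [Semiring R]
    (f : (α →₀ R) →ₗ[R] (β →₀ R)) {y : α →₀ R} {b : β} (hb : b ∈ (f y).support) :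
    ∃ a ∈ y.support, b ∈ (f (Finsupp.single a 1)).support := by
  classical
  have hfy : f y = y.sum fun a c => c • f (Finsupp.single a 1) := by
    conv_lhs => rw [← y.sum_single, map_finsuppSum]
    exact sum_congr fun a _ => by rw [← smul_single_one, map_smul]
  rw [hfy] at hb
  obtain ⟨a, ha, hab⟩ := Finset.mem_biUnion.1 (support_sum hb)
  exact ⟨a, ha, support_smul hab⟩

def reducedGenerators {K G : Type*} [Semiring K] (T : Module.End K (G →₀ K)) : Set G :=
  {g | T (single g 1) = single g 1}

lemma eq_of_mem_support_single_of_mem_reducedGenerators {K G : Type*} [Semiring K]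
    {T : Module.End K (G →₀ K)} {g g' : G} (hg : g ∈ reducedGenerators T)
    (hg' : g' ∈ (T (single g 1)).support) : g' = g := by
  rw [hg] at hg'
  exact Finset.mem_singleton.1 (support_single_subset hg')

namespace IsGenRedOp

variable {K G : Type*} [Field K] [PartialOrder G] {T : Module.End K (G →₀ K)}

lemma isIdempotentElem (hT : IsGenRedOp T) : IsIdempotentElem T := hT.1

lemma lt_of_mem_support_single (hT : IsGenRedOp T) {g g' : G} (hg : g ∉ reducedGenerators T)
    (hg' : g' ∈ (T (single g 1)).support) : g' < g :=
  (hT.2 g).resolve_left hg g' hg'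

lemma le_of_mem_support_single (hT : IsGenRedOp T) {g g' : G}
    (hg' : g' ∈ (T (single g 1)).support) : g' ≤ g := by
  by_cases hg : g ∈ reducedGenerators T
  · exact (eq_of_mem_support_single_of_mem_reducedGenerators hg hg').le
  · exact (hT.lt_of_mem_support_single hg hg').le

lemma exists_le_of_mem_support (hT : IsGenRedOp T) {y : G →₀ K} {g' : G}
    (hg' : g' ∈ (T y).support) : ∃ g ∈ y.support, g' ≤ g := by
  obtain ⟨g, hg, hg'g⟩ := T.exists_mem_support_single_of_mem_support hg'
  exact ⟨g, hg, hT.le_of_mem_support_single hg'g⟩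

lemma mem_reducedGenerators_of_mem_support (hT : IsGenRedOp T) {y : G →₀ K} (hy : T y = y)
    {g₀ : G} (hg₀ : g₀ ∈ y.support) : g₀ ∈ reducedGenerators T := by
  classical
  by_contra hg₀R
  obtain ⟨g, hgN, hmax⟩ :=
    (y.support.filter (· ∉ reducedGenerators T)).exists_maximal ⟨g₀, by simp [hg₀, hg₀R]⟩
  obtain ⟨hg, hgR⟩ := Finset.mem_filter.1 hgN
  rw [← hy] at hg
  obtain ⟨h, hh, hgh⟩ := T.exists_mem_support_single_of_mem_support hg
  by_cases hhR : h ∈ reducedGenerators T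
  · exact hgR (eq_of_mem_support_single_of_mem_reducedGenerators hhR hgh ▸ hhR)
  · have hlt := hT.lt_of_mem_support_single hhR hgh
    exact hlt.not_ge (hmax (by simp [hh, hhR]) hlt.le)

lemma range_eq_supported (hT : IsGenRedOp T) :
    LinearMap.range T = supported K K (reducedGenerators T) := by
  refine le_antisymm (fun y hy => ?_) ?_
  · have hTy : T y = y := (LinearMap.IsIdempotentElem.mem_range_iff hT.isIdempotentElem).1 hy
    exact (mem_supported K y).2 fun g hg => hT.mem_reducedGenerators_of_mem_support hTy hg
  · rw [supported_eq_span_single, Submodule.span_le]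
    rintro _ ⟨g, hg, rfl⟩
    exact ⟨single g 1, hg⟩

lemma reducedGenerators_subset_of_ker_le {T₁ T₂ : Module.End K (G →₀ K)} (h₁ : IsGenRedOp T₁)
    (h₂ : IsGenRedOp T₂) (hker : LinearMap.ker T₁ ≤ LinearMap.ker T₂) :
    reducedGenerators T₂ ⊆ reducedGenerators T₁ := by
  intro g hg₂
  by_contra hg₁
  have hcomp : T₂ (T₁ (single g 1)) = single g 1 := by
    have hT₂T₁ : T₂ ∘ₗ T₁ = T₂ :=
      (LinearMap.IsIdempotentElem.comp_eq_left_iff h₁.isIdempotentElem T₂).2 hker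
    rw [← LinearMap.comp_apply, hT₂T₁, hg₂]
  have hg : g ∈ (T₂ (T₁ (single g 1))).support := by simp [hcomp]
  obtain ⟨g', hg', hgg'⟩ := h₂.exists_le_of_mem_support hg
  exact (hgg'.trans_lt (h₁.lt_of_mem_support_single hg₁ hg')).false

lemma eq_of_ker_eq {S₁ S₂ : Module.End K (G →₀ K)} (h₁ : IsGenRedOp S₁) (h₂ : IsGenRedOp S₂)
    (hker : LinearMap.ker S₁ = LinearMap.ker S₂) : S₁ = S₂ := by
  have hred : reducedGenerators S₁ = reducedGenerators S₂ :=
    (reducedGenerators_subset_of_ker_le h₂ h₁ hker.ge).antisymm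
      (reducedGenerators_subset_of_ker_le h₁ h₂ hker.le)
  refine LinearMap.IsIdempotentElem.ext h₁.isIdempotentElem h₂.isIdempotentElem ⟨?_, hker⟩
  rw [h₁.range_eq_supported, h₂.range_eq_supported, hred]

end IsGenRedOp

/-- For generalised reduction operators: if `ker T₁ ⊆ ker T₂` then every
`T₂`-reduced generator is `T₁`-reduced; consequently two generalised reduction
operators with the same kernel are equal, and reverse inclusion of kernels is
antisymmetric, hence a partial order. -/
theorem genRedOp_ker_mono {K G : Type*} [Field K] [PartialOrder G]
    (T₁ T₂ : Module.End K (G →₀ K))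
    (h₁ : IsGenRedOp T₁) (h₂ : IsGenRedOp T₂)
    (hker : LinearMap.ker T₁ ≤ LinearMap.ker T₂) :
    ({g : G | T₂ (Finsupp.single g 1) = Finsupp.single g 1} ⊆
        {g : G | T₁ (Finsupp.single g 1) = Finsupp.single g 1}) ∧
      (∀ S₁ S₂ : Module.End K (G →₀ K), IsGenRedOp S₁ → IsGenRedOp S₂ →
        LinearMap.ker S₁ = LinearMap.ker S₂ → S₁ = S₂) :=
  ⟨h₁.reducedGenerators_subset_of_ker_le h₂ hker, fun _ _ hS₁ hS₂ => hS₁.eq_of_ker_eq hS₂⟩
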